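/- arXiv:math/0506291 — 4 statements merged into one kernel-verified Lean document; each statement's English description precedes it below -/
import Mathlib

section
/- Let B ⊆ A be division rings. The maps 𝓡* sending U to {c ∈ A : u(ca) = c·u(a) for all u ∈ U and all a ∈ A}, and 𝓙* sending C to End(_CA) = {u ∈ End(_BA) : u(cx) = c·u(x) for all c ∈ C, x ∈ A}, are mutually inverse bijections between the set of A-subrings U of End(_BA) that are finite-dimensional as right A-vector spaces, and the set of intermediate division rings B ⊆ C ⊆ A such that A is finite-dimensional as a left C-vector space. -/
/-!
Let `U` contain all right multiplications and let `C = 𝓡*(U)`. The key fact is a density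
statement: if every `u ∈ U` vanishing on a finite set `s` also vanishes at `x`, then `x` lies in
the `C`-span of `s`. Inductively, when some `u ∈ U` kills `s` but not `z`, normalise it to
`u z = 1`; then every `w ∈ U` killing `s` satisfies `w x = u x · w z`, which both forces
`u x ∈ C` and shows that `x - (u x) z` is killed by everything killing `s`. Consequently
evaluation at `n` `C`-independent vectors maps `U` onto `Aⁿ`, so `[A : C] ≤ dim U_A`, and at a
`C`-basis it shows that every `C`-linear map is already in `U`, i.e. `𝓙* 𝓡* U = U`.
Conversely `End(_C A)` embeds in `Aⁿ` by evaluation at a `C`-basis, and for `c ∉ C` a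
`C`-linear functional killing `1` but not `c` shows that `c ∉ 𝓡* 𝓙* C`.
-/

variable (A : Type*) [DivisionRing A]

/-- Left multiplication `λ_b : x ↦ b·x` as an additive endomorphism of `A`. -/
def lmul (b : A) : AddMonoid.End A := AddMonoidHom.mulLeft b

/-- Right multiplication `ρ_a : x ↦ x·a` as an additive endomorphism of `A`. -/
def rmul (a : A) : AddMonoid.End A := AddMonoidHom.mulRight a

/-- For a subring `U` of `AddMonoid.End A` containing every right multiplication
`ρ_a`, the ring homomorphism `Aᵐᵒᵖ →+* U` sending `op a` to `ρ_a`.  Composition with it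
endows `U` with its right `A`-vector space structure `u · a = ρ_a ∘ u`. -/
def rmulHom (U : Subring (AddMonoid.End A)) (h : ∀ a : A, rmul A a ∈ U) : Aᵐᵒᵖ →+* U where
  toFun a := ⟨rmul A a.unop, h a.unop⟩
  map_one' := Subtype.ext (AddMonoidHom.ext fun x => mul_one x)
  map_mul' a b := Subtype.ext (AddMonoidHom.ext fun x => (mul_assoc x b.unop a.unop).symm)
  map_zero' := Subtype.ext (AddMonoidHom.ext fun x => mul_zero x)
  map_add' a b := Subtype.ext (AddMonoidHom.ext fun x => mul_add x a.unop b.unop)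

namespace AddMonoid.End

variable {M : Type*} [AddCommGroup M]

@[simp] lemma sub_apply (f g : AddMonoid.End M) (x : M) : (f - g) x = f x - g x := rfl

@[simp] lemma finsetSum_apply {ι : Type*} (s : Finset ι) (f : ι → AddMonoid.End M) (x : M) :
    (∑ i ∈ s, f i) x = ∑ i ∈ s, f i x :=
  AddMonoidHom.finsetSum_apply f s x

end AddMonoid.End

namespace JacobsonBourbaki

variable {A}

@[simp] lemma lmul_apply (b x : A) : lmul A b x = b * x := rfl

@[simp] lemma rmul_apply (a x : A) : rmul A a x = x * a := rfl

lemma mem_centralizer_lmul_iff {s : Set A} {u : AddMonoid.End A} :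
    u ∈ Subring.centralizer (lmul A '' s) ↔ ∀ c ∈ s, ∀ a, u (c * a) = c * u a := by
  simp only [Subring.mem_centralizer_iff, Set.forall_mem_image, DFunLike.ext_iff,
    AddMonoid.End.coe_mul, Function.comp_apply, lmul_apply]
  exact forall₂_congr fun _ _ => forall_congr' fun _ => eq_comm

lemma rmul_mem_centralizer_lmul (s : Set A) (a : A) :
    rmul A a ∈ Subring.centralizer (lmul A '' s) :=
  mem_centralizer_lmul_iff.mpr fun c _ x => mul_assoc c x a

/-- The paper's `𝓡*(U)`. -/
def linearityField (U : Subring (AddMonoid.End A)) : Subfield A where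
  carrier := {c | ∀ u ∈ U, ∀ a, u (c * a) = c * u a}
  one_mem' u _ a := by rw [one_mul, one_mul]
  mul_mem' hc hd u hu a := by rw [mul_assoc, hc u hu, hd u hu, mul_assoc]
  zero_mem' u _ a := by rw [zero_mul, zero_mul, map_zero]
  add_mem' hc hd u hu a := by rw [add_mul, map_add, hc u hu, hd u hu, add_mul]
  neg_mem' hc u hu a := by rw [neg_mul, map_neg, hc u hu, neg_mul]
  inv_mem' c hc u hu a := by
    rcases eq_or_ne c 0 with rfl | h
    · simp
    · calc u (c⁻¹ * a) = c⁻¹ * (c * u (c⁻¹ * a)) := by rw [inv_mul_cancel_left₀ h]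
        _ = c⁻¹ * u a := by rw [← hc u hu, mul_inv_cancel_left₀ h]

lemma le_centralizer_lmul_iff {U : Subring (AddMonoid.End A)} {s : Set A} :
    U ≤ Subring.centralizer (lmul A '' s) ↔ s ⊆ linearityField U := by
  simp only [SetLike.le_def, mem_centralizer_lmul_iff, Set.subset_def]
  exact ⟨fun h c hc u hu => h hu c hc, fun h u hu c hc => h c hc u hu⟩

def toLinearMapOfMemCentralizer (C : Subfield A) {u : AddMonoid.End A}
    (hu : u ∈ Subring.centralizer (lmul A '' (C : Set A))) : A →ₗ[C] A where
  toFun := u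
  map_add' := u.map_add
  map_smul' c a := mem_centralizer_lmul_iff.mp hu c c.2 a

lemma toAddMonoidHom_mem_centralizer_lmul (C : Subfield A) (f : A →ₗ[C] A) :
    f.toAddMonoidHom ∈ Subring.centralizer (lmul A '' (C : Set A)) :=
  mem_centralizer_lmul_iff.mpr fun c hc a => f.map_smul ⟨c, hc⟩ a

theorem linearityField_centralizer_lmul (C : Subfield A) :
    linearityField (Subring.centralizer (lmul A '' (C : Set A))) = C := by
  refine le_antisymm (fun c hc => ?_) (le_centralizer_lmul_iff.mp le_rfl)
  by_contra hcC
  have hc_span : c ∉ Submodule.span C {(1 : A)} := by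
    rw [Submodule.mem_span_singleton]
    rintro ⟨γ, rfl⟩
    exact hcC (by simp [Subfield.smul_def])
  obtain ⟨f, hfc, hf1⟩ := Submodule.exists_dual_map_eq_bot_of_notMem hc_span inferInstance
  have hf1 : f 1 = 0 :=
    (Submodule.span_singleton_le_iff_mem _ _).mp (LinearMap.le_ker_iff_map.mpr hf1)
  -- `g = f` read in `A` is `C`-linear with `g 1 = 0 ≠ g c`, so it does not commute with `c * ·`.
  let g := (LinearMap.toSpanSingleton C A 1).comp f
  have hg : g (c * 1) = c * g 1 := hc g.toAddMonoidHom (toAddMonoidHom_mem_centralizer_lmul C g) 1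
  simp only [g, mul_one, LinearMap.coe_comp, Function.comp_apply,
    LinearMap.toSpanSingleton_apply, Subfield.smul_def, smul_eq_mul, hf1, zero_smul, mul_zero,
    ZeroMemClass.coe_eq_zero] at hg
  exact hfc hg

section Density

variable {U : Subring (AddMonoid.End A)}

lemma apply_eq_mul_apply_of_forall_vanishing (hU : ∀ a : A, rmul A a ∈ U) {s : Set A}
    {x z : A} (hx : ∀ v ∈ U, (∀ y ∈ insert z s, v y = 0) → v x = 0)
    {u : AddMonoid.End A} (hu : u ∈ U) (hus : ∀ y ∈ s, u y = 0) (huz : u z = 1)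
    {w : AddMonoid.End A} (hw : w ∈ U) (hws : ∀ y ∈ s, w y = 0) :
    w x = u x * w z := by
  have hv := hx (w - rmul A (w z) * u) (U.sub_mem hw (U.mul_mem (hU _) hu)) <| by
    rintro y (rfl | hy)
    · simp [huz]
    · simp [hus y hy, hws y hy]
  simpa [sub_eq_zero] using hv

lemma apply_mem_linearityField_of_forall_vanishing (hU : ∀ a : A, rmul A a ∈ U) {s : Set A}
    {x z : A} (hx : ∀ v ∈ U, (∀ y ∈ insert z s, v y = 0) → v x = 0)
    {u : AddMonoid.End A} (hu : u ∈ U) (hus : ∀ y ∈ s, u y = 0) (huz : u z = 1) :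
    u x ∈ linearityField U := by
  intro v hv a
  have := apply_eq_mul_apply_of_forall_vanishing hU hx hu hus huz
    (U.mul_mem (U.mul_mem hv (hU a)) hu) (fun y hy => by simp [hus y hy])
  simpa [huz] using this

theorem mem_span_linearityField_of_forall_vanishing (hU : ∀ a : A, rmul A a ∈ U)
    (s : Finset A) {x : A} (hx : ∀ u ∈ U, (∀ y ∈ s, u y = 0) → u x = 0) :
    x ∈ Submodule.span (linearityField U) (s : Set A) := by
  classical
  induction s using Finset.induction generalizing x with
  | empty => simpa using hx 1 U.one_mem (by simp)
  | insert z s _ ih =>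
    rw [Finset.coe_insert]
    simp_rw [← Finset.mem_coe, Finset.coe_insert] at hx
    by_cases hz : ∃ u ∈ U, (∀ y ∈ s, u y = 0) ∧ u z ≠ 0
    · obtain ⟨u, hu, hus, huz⟩ := hz
      set u' := rmul A (u z)⁻¹ * u
      have hu' : u' ∈ U := U.mul_mem (hU _) hu
      have hu's : ∀ y ∈ s, u' y = 0 := fun y hy => by simp [u', hus y hy]
      have hu'z : u' z = 1 := mul_inv_cancel₀ huz
      have hc := apply_mem_linearityField_of_forall_vanishing hU hx hu' hu's hu'z
      have hrest : x - u' x * z ∈ Submodule.span (linearityField U) (s : Set A) := ih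
        fun w hw hws => by
          rw [map_sub, hc w hw, apply_eq_mul_apply_of_forall_vanishing hU hx hu' hu's hu'z hw hws,
            sub_self]
      have hz : (⟨u' x, hc⟩ : linearityField U) • z ∈
          Submodule.span (linearityField U) (insert z (s : Set A)) :=
        Submodule.smul_mem _ _ (Submodule.subset_span (Set.mem_insert z _))
      simpa [Subfield.smul_def] using
        Submodule.add_mem _ (Submodule.span_mono (Set.subset_insert z _) hrest) hz
    · push Not at hz
      exact Submodule.span_mono (Set.subset_insert z _)
        (ih fun u hu hus => hx u hu (Set.forall_mem_insert.mpr ⟨hz u hu hus, hus⟩))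

theorem exists_mem_apply_eq_of_linearIndependent (hU : ∀ a : A, rmul A a ∈ U)
    {ι : Type*} [Fintype ι] {x : ι → A} (hx : LinearIndependent (linearityField U) x)
    (y : ι → A) : ∃ u ∈ U, ∀ i, u (x i) = y i := by
  classical
  have hsep : ∀ j, ∃ u ∈ U, (∀ i, i ≠ j → u (x i) = 0) ∧ u (x j) ≠ 0 := by
    intro j
    by_contra! h
    have hj := mem_span_linearityField_of_forall_vanishing hU ((Finset.univ.erase j).image x)
      fun u hu hus => h u hu fun i hij => hus _ (Finset.mem_image_of_mem x (by simpa using hij))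
    rw [Finset.coe_image] at hj
    exact hx.notMem_span_image (by simp) hj
  choose u hu hu_ne hu_eq using hsep
  refine ⟨∑ j, rmul A ((u j (x j))⁻¹ * y j) * u j,
    Subring.sum_mem _ fun j _ => U.mul_mem (hU _) (hu j), fun i => ?_⟩
  rw [AddMonoid.End.finsetSum_apply, Finset.sum_eq_single i]
  · simp [← mul_assoc, mul_inv_cancel₀ (hu_eq i)]
  · intro j _ hji
    simp [hu_ne j i (Ne.symm hji)]
  · simp

end Density

def evalLinearMap (U : Subring (AddMonoid.End A)) (hU : ∀ a : A, rmul A a ∈ U)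
    {ι : Type*} (x : ι → A) :
    letI := Module.compHom U (rmulHom A U hU); U →ₗ[Aᵐᵒᵖ] (ι → Aᵐᵒᵖ) :=
  letI := Module.compHom U (rmulHom A U hU)
  { toFun u i := MulOpposite.op (u.1 (x i))
    map_add' _ _ := rfl
    map_smul' _ _ := rfl }

theorem finite_linearityField {U : Subring (AddMonoid.End A)} (hU : ∀ a : A, rmul A a ∈ U)
    (hfin : letI := Module.compHom U (rmulHom A U hU); Module.Finite Aᵐᵒᵖ U) :
    Module.Finite (linearityField U) A := by
  let := Module.compHom U (rmulHom A U hU)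
  refine Module.rank_lt_aleph0_iff.mp <|
    (rank_le (n := Module.finrank Aᵐᵒᵖ U) fun s hs => ?_).trans_lt Cardinal.natCast_lt_aleph0
  have hsurj : Function.Surjective (evalLinearMap U hU fun i : s => (i : A)) := fun y => by
    obtain ⟨u, hu, huy⟩ := exists_mem_apply_eq_of_linearIndependent hU hs fun i => (y i).unop
    exact ⟨⟨u, hu⟩, funext fun i => congrArg MulOpposite.op (huy i)⟩
  simpa using LinearMap.finrank_le_finrank_of_surjective hsurj

theorem finite_centralizer_lmul (C : Subfield A) [Module.Finite C A]
    (h : ∀ a : A, rmul A a ∈ Subring.centralizer (lmul A '' (C : Set A))) :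
    letI := Module.compHom (Subring.centralizer (lmul A '' (C : Set A))) (rmulHom A _ h)
    Module.Finite Aᵐᵒᵖ (Subring.centralizer (lmul A '' (C : Set A))) := by
  let := Module.compHom (Subring.centralizer (lmul A '' (C : Set A))) (rmulHom A _ h)
  let b := Module.finBasis C A
  refine FiniteDimensional.of_injective (evalLinearMap _ h b) fun u v huv => Subtype.ext ?_
  have := b.ext (f₁ := toLinearMapOfMemCentralizer C u.2) (f₂ := toLinearMapOfMemCentralizer C v.2)
    fun i => MulOpposite.op_injective (congrFun huv i)
  exact AddMonoidHom.ext (LinearMap.congr_fun this)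

theorem centralizer_lmul_linearityField {U : Subring (AddMonoid.End A)}
    (hU : ∀ a : A, rmul A a ∈ U)
    (hfin : letI := Module.compHom U (rmulHom A U hU); Module.Finite Aᵐᵒᵖ U) :
    Subring.centralizer (lmul A '' (linearityField U : Set A)) = U := by
  have hle : U ≤ Subring.centralizer (lmul A '' (linearityField U : Set A)) :=
    le_centralizer_lmul_iff.mpr subset_rfl
  refine le_antisymm (fun v hv => ?_) hle
  have := finite_linearityField hU hfin
  let b := Module.finBasis (linearityField U) A
  obtain ⟨u, hu, hbu⟩ := exists_mem_apply_eq_of_linearIndependent hU b.linearIndependent (v ∘ b)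
  have : toLinearMapOfMemCentralizer _ hv = toLinearMapOfMemCentralizer _ (hle hu) :=
    b.ext fun i => (hbu i).symm
  rwa [show v = u from AddMonoidHom.ext (LinearMap.congr_fun this)]

end JacobsonBourbaki

/-- **Jacobson–Bourbaki theorem for division rings.**
Let `B ⊆ A` be division rings.  The maps `𝓡*` sending `U` to
`{c ∈ A : u (c·a) = c·u(a) for all u ∈ U, a ∈ A}` and `𝓙*` sending `C` to
`End(_C A)` (the centralizer in `AddMonoid.End A` of the left multiplications by
elements of `C`) are mutually inverse bijections between the set of `A`-subrings `U` of
`End(_B A)` which are finite dimensional as right `A`-vector spaces and the set of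
intermediate division rings `B ⊆ C ⊆ A` with `A` finite dimensional as a left
`C`-vector space. -/
theorem stmt_3 {A : Type*} [DivisionRing A] (B : Subfield A)
    (Dset : Set (Subring (AddMonoid.End A)))
    (hD : Dset = {U | U ≤ Subring.centralizer (lmul A '' (B : Set A)) ∧
      (∀ a : A, rmul A a ∈ U) ∧
      ∀ h : ∀ a : A, rmul A a ∈ U,
        (letI := Module.compHom U (rmulHom A U h); Module.Finite Aᵐᵒᵖ U)})
    (Iset : Set (Subfield A))
    (hI : Iset = {C | B ≤ C ∧ Module.Finite C A}) :
    (∀ C ∈ Iset, Subring.centralizer (lmul A '' (C : Set A)) ∈ Dset) ∧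
    (∀ U ∈ Dset, ∃ C ∈ Iset,
      (C : Set A) = {c : A | ∀ u ∈ U, ∀ a : A, u (c * a) = c * u a}) ∧
    (∀ C ∈ Iset,
      {c : A | ∀ u ∈ Subring.centralizer (lmul A '' (C : Set A)),
        ∀ a : A, u (c * a) = c * u a} = (C : Set A)) ∧
    (∀ U ∈ Dset, Subring.centralizer
        (lmul A '' {c : A | ∀ u ∈ U, ∀ a : A, u (c * a) = c * u a}) = U) := by
  open JacobsonBourbaki in
  subst hD hI
  refine ⟨?_, ?_, fun C _ => congrArg SetLike.coe (linearityField_centralizer_lmul C), ?_⟩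
  · rintro C ⟨hBC, hC⟩
    exact ⟨Subring.centralizer_le _ _ (Set.image_mono hBC), rmul_mem_centralizer_lmul _,
      finite_centralizer_lmul C⟩
  · rintro U ⟨hUB, hU, hUfin⟩
    exact ⟨linearityField U, ⟨le_centralizer_lmul_iff.mp hUB, finite_linearityField hU (hUfin hU)⟩,
      rfl⟩
  · rintro U ⟨-, hU, hUfin⟩
    exact centralizer_lmul_linearityField hU (hUfin hU)
end

section
/- Let B ⊆ A be division rings, and let C and C' be intermediate division rings B ⊆ C ⊆ A and B ⊆ C' ⊆ A such that A is finite-dimensional as a left vector space over each of C and C'. Then there exists a nonzero element g ∈ A with C' = gCg⁻¹ if and only if there exists a ring isomorphism φ: End(_CA) → End(_{C'}A) satisfying φ(ρ_a) = ρ_a for every a ∈ A (i.e., End(_CA) and End(_{C'}A) are isomorphic as A-rings). -/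
/-!
An `A`-ring isomorphism `φ` out of `End(_C A)` is inner. Pick a `C`-linear retraction `π` of `A`
onto `C` and a point `x₀` with `φ π x₀ ≠ 0`. Since `π` takes values in `C`, every `u ∈ End(_C A)`
satisfies `ρ_{u a} ∘ π = u ∘ ρ_a ∘ π`, so `ψ a := φ(ρ_a ∘ π) x₀` intertwines `u` with `φ u`. Taking
`u = ρ_b`, which `φ` fixes, shows `ψ = λ_g` with `g = ψ 1 ≠ 0`, hence `φ u = λ_g ∘ u ∘ λ_g⁻¹`.
Conjugation by `λ_g` carries the centralizer of `λ(C)` onto the centralizer of `λ(gCg⁻¹)`, and a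
subfield `D` is recovered from `End(_D A)` as `{d | λ_d commutes with End(_D A)}` (every
`d ∉ D` is separated from `1` by a `D`-linear functional). Both directions follow.
-/

variable (A : Type*) [DivisionRing A]

open Subring

section Conj

variable {R S : Type*} [Ring R] [Ring S]

def conjRingEquiv (u : Rˣ) : R ≃+* R :=
  MulSemiringAction.toRingEquiv (ConjAct Rˣ) R (ConjAct.toConjAct u)

theorem conjRingEquiv_apply (u : Rˣ) (x : R) : conjRingEquiv u x = u * x * ↑u⁻¹ := rfl

theorem Subring.map_centralizer_ringEquiv (e : R ≃+* S) (s : Set R) :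
    (centralizer s).map e.toRingHom = centralizer (e '' s) := by
  ext y
  rw [RingEquiv.toRingHom_eq_coe, mem_map_equiv, mem_centralizer_iff, mem_centralizer_iff,
    Set.forall_mem_image]
  refine forall₂_congr fun x _ => ?_
  rw [← e.injective.eq_iff, map_mul, map_mul, e.apply_symm_apply]

theorem Subring.map_eq_of_forall_coe_eq {s : Subring R} {t : Subring S} (φ : s ≃ t)
    (e : R →+* S) (h : ∀ x, (φ x : S) = e x) : s.map e = t := by
  ext y
  constructor
  · rintro ⟨x, hx, rfl⟩
    exact h ⟨x, hx⟩ ▸ (φ _).2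
  · intro hy
    refine ⟨φ.symm ⟨y, hy⟩, (φ.symm _).2, ?_⟩
    rw [← h, φ.apply_symm_apply]

end Conj

variable {A}

theorem coe_map_conjRingEquiv (g : Aˣ) (D : Subfield A) :
    (D.map (conjRingEquiv g).toRingHom : Set A) = (fun c => g * c * (g : A)⁻¹) '' D := by
  rw [Subfield.coe_map]
  congr 1
  ext c
  rw [RingEquiv.toRingHom_eq_coe, RingHom.coe_coe, conjRingEquiv_apply, Units.val_inv_eq_inv_val]

@[simp] theorem lmul_apply (b x : A) : lmul A b x = b * x := rfl

@[simp] theorem rmul_apply (a x : A) : rmul A a x = x * a := rfl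

theorem mem_centralizer_lmul_iff {s : Set A} {u : AddMonoid.End A} :
    u ∈ centralizer (lmul A '' s) ↔ ∀ c ∈ s, ∀ x, u (c * x) = c * u x := by
  simp only [mem_centralizer_iff, Set.forall_mem_image, AddMonoid.End.ext_iff]
  exact forall₂_congr fun c _ => forall_congr' fun x => eq_comm

theorem rmul_mem_centralizer_lmul (s : Set A) (a : A) : rmul A a ∈ centralizer (lmul A '' s) :=
  mem_centralizer_lmul_iff.2 fun c _ x => mul_assoc c x a

theorem LinearMap.toAddMonoidHom_mem_centralizer_lmul {D : Subfield A} (f : A →ₗ[D] A) :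
    f.toAddMonoidHom ∈ centralizer (lmul A '' D) :=
  mem_centralizer_lmul_iff.2 fun c hc x => f.map_smul ⟨c, hc⟩ x

theorem lmul_mem_centralizer_centralizer_lmul_iff (D : Subfield A) (d : A) :
    lmul A d ∈ centralizer (centralizer (lmul A '' D) : Set (AddMonoid.End A)) ↔ d ∈ D := by
  refine ⟨fun hd => ?_, fun hd => Set.subset_centralizer_centralizer ⟨d, hd, rfl⟩⟩
  by_contra hdD
  have hd1 : d ∉ D ∙ (1 : A) := by
    rw [Submodule.mem_span_singleton]
    rintro ⟨c, rfl⟩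
    exact hdD (by simp [Subfield.smul_def])
  obtain ⟨f, hfd, hf⟩ := Submodule.exists_dual_map_eq_bot_of_notMem hd1 inferInstance
  have hf1 : f 1 = 0 := by
    have := Submodule.mem_map_of_mem (f := f) (Submodule.mem_span_singleton_self (1 : A))
    rwa [hf, Submodule.mem_bot] at this
  let u := LinearMap.toSpanSingleton D A 1 ∘ₗ f
  have hu := DFunLike.congr_fun (mem_centralizer_iff.1 hd _ u.toAddMonoidHom_mem_centralizer_lmul) 1
  change u (d * 1) = d * u 1 at hu
  exact hfd (by simpa [u, hf1, Subfield.smul_def] using hu)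

theorem centralizer_lmul_injective :
    Function.Injective fun D : Subfield A => centralizer (lmul A '' D) := by
  intro D D' h
  ext d
  rw [← lmul_mem_centralizer_centralizer_lmul_iff, ← lmul_mem_centralizer_centralizer_lmul_iff]
  dsimp only at h
  rw [h]

def lmulConj (g : Aˣ) : AddMonoid.End A ≃+* AddMonoid.End A :=
  conjRingEquiv (Units.map (Module.toAddMonoidEnd A A).toMonoidHom g)

theorem lmulConj_apply (g : Aˣ) (u : AddMonoid.End A) (x : A) :
    lmulConj g u x = g * u (↑g⁻¹ * x) := rfl

theorem lmulConj_lmul (g : Aˣ) (c : A) : lmulConj g (lmul A c) = lmul A (conjRingEquiv g c) := by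
  ext x
  simp [lmulConj_apply, conjRingEquiv_apply, mul_assoc]

theorem lmulConj_rmul (g : Aˣ) (a : A) : lmulConj g (rmul A a) = rmul A a := by
  ext x
  simp [lmulConj_apply, mul_assoc]

theorem map_lmulConj_centralizer_lmul (g : Aˣ) (D : Subfield A) :
    (centralizer (lmul A '' D)).map (lmulConj g).toRingHom =
      centralizer (lmul A '' D.map (conjRingEquiv g).toRingHom) := by
  rw [map_centralizer_ringEquiv, Set.image_image, Subfield.coe_map, Set.image_image]
  simp only [lmulConj_lmul]
  rfl

theorem exists_retraction_mem_centralizer_lmul (D : Subfield A) :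
    ∃ π ∈ centralizer (lmul A '' D), π 1 = 1 ∧ ∀ x, π x ∈ D := by
  obtain ⟨r, hr⟩ := (LinearMap.toSpanSingleton D A 1).exists_leftInverse_of_injective
    (LinearMap.ker_toSpanSingleton D one_ne_zero)
  let π := LinearMap.toSpanSingleton D A 1 ∘ₗ r
  refine ⟨π.toAddMonoidHom, π.toAddMonoidHom_mem_centralizer_lmul, ?_, fun x => ?_⟩
  · have : r 1 = 1 := by simpa using LinearMap.congr_fun hr 1
    change π 1 = 1
    simp [π, this]
  · change π x ∈ D
    simp [π, Subfield.smul_def]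

theorem rmul_apply_mul_eq_of_forall_mem {D : Subfield A} {π u : AddMonoid.End A}
    (hπ : ∀ x, π x ∈ D) (hu : u ∈ centralizer (lmul A '' D)) (a : A) :
    rmul A (u a) * π = u * rmul A a * π := by
  ext x
  exact (mem_centralizer_lmul_iff.1 hu _ (hπ x) a).symm

theorem exists_eq_lmulConj_of_map_rmul (C : Subfield A)
    (f : centralizer (lmul A '' C) →+* AddMonoid.End A) (hf : Function.Injective f)
    (hρ : ∀ a, f ⟨rmul A a, rmul_mem_centralizer_lmul _ a⟩ = rmul A a) :
    ∃ g : Aˣ, ∀ u, f u = lmulConj g u := by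
  obtain ⟨π, hπE, hπ1, hπC⟩ := exists_retraction_mem_centralizer_lmul C
  let ρ (a : A) : centralizer (lmul A '' C) := ⟨rmul A a, rmul_mem_centralizer_lmul _ a⟩
  have hρ1 : ρ 1 = 1 := by ext x; exact mul_one x
  obtain ⟨x₀, hx₀⟩ : ∃ x₀, f ⟨π, hπE⟩ x₀ ≠ 0 := by
    by_contra! h
    have : f ⟨π, hπE⟩ = f 0 := by ext x; simp [h]
    have := congrArg (fun v : centralizer (lmul A '' C) => (v : AddMonoid.End A) 1) (hf this)
    simp [hπ1] at this
  let ψ (a : A) : A := f (ρ a * ⟨π, hπE⟩) x₀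
  have hψ (u : centralizer (lmul A '' C)) (a : A) : ψ ((u : AddMonoid.End A) a) = f u (ψ a) := by
    have : ρ ((u : AddMonoid.End A) a) * ⟨π, hπE⟩ = u * ρ a * ⟨π, hπE⟩ :=
      Subtype.ext (rmul_apply_mul_eq_of_forall_mem hπC u.2 a)
    change f (_ * _) x₀ = _
    rw [this, mul_assoc, map_mul]
    rfl
  have hψ_mul (a : A) : ψ a = ψ 1 * a := by
    simpa [ρ, hρ] using hψ (ρ a) 1
  have hg : ψ 1 ≠ 0 := by simpa [ψ, hρ1] using hx₀
  refine ⟨Units.mk0 _ hg, fun u => ?_⟩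
  ext y
  have := hψ u ((ψ 1)⁻¹ * y)
  rw [hψ_mul, hψ_mul ((ψ 1)⁻¹ * y), mul_inv_cancel_left₀ hg] at this
  simp [lmulConj_apply, ← this]

theorem stmt_4_general {A : Type*} [DivisionRing A] (C C' : Subfield A) :
    (∃ g : A, g ≠ 0 ∧ (C' : Set A) = (fun c => g * c * g⁻¹) '' (C : Set A)) ↔
    (∃ φ : Subring.centralizer (lmul A '' (C : Set A)) ≃+*
        Subring.centralizer (lmul A '' (C' : Set A)),
      ∀ (a : A) (u : Subring.centralizer (lmul A '' (C : Set A))),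
        (u : AddMonoid.End A) = rmul A a → (φ u : AddMonoid.End A) = rmul A a) := by
  constructor
  · rintro ⟨g, hg, hC'⟩
    rw [← Units.val_mk0 hg, ← coe_map_conjRingEquiv, SetLike.coe_set_eq] at hC'
    have hE := map_lmulConj_centralizer_lmul (Units.mk0 g hg) C
    rw [← hC'] at hE
    refine ⟨((lmulConj _).subringMap).trans (RingEquiv.subringCongr hE), fun a u hu => ?_⟩
    change lmulConj _ (u : AddMonoid.End A) = _
    rw [hu, lmulConj_rmul]
  · rintro ⟨φ, hφ⟩
    obtain ⟨g, hg⟩ := exists_eq_lmulConj_of_map_rmul C ((centralizer _).subtype.comp φ.toRingHom)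
      (Subtype.val_injective.comp φ.injective) (fun a => hφ a _ rfl)
    have hE := Subring.map_eq_of_forall_coe_eq φ.toEquiv (lmulConj g).toRingHom hg
    rw [map_lmulConj_centralizer_lmul] at hE
    exact ⟨g, g.ne_zero, by rw [← coe_map_conjRingEquiv, centralizer_lmul_injective hE]⟩

/-- Let `B ⊆ A` be division rings and let `C, C'` be intermediate division rings
`B ⊆ C, C' ⊆ A` such that `A` is finite dimensional as a left vector space over each of
them.  Then `C' = g·C·g⁻¹` for some nonzero `g ∈ A` if and only if there is a ring
isomorphism `End(_C A) ≃ End(_{C'} A)` (between the centralizers in `AddMonoid.End A` of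
the corresponding sets of left multiplications) fixing every right multiplication `ρ_a`,
i.e. iff `End(_C A)` and `End(_{C'} A)` are isomorphic as `A`-rings. -/
theorem stmt_4 {A : Type*} [DivisionRing A] (B C C' : Subfield A)
    (hBC : B ≤ C) (hBC' : B ≤ C')
    (hC : Module.Finite C A) (hC' : Module.Finite C' A) :
    (∃ g : A, g ≠ 0 ∧ (C' : Set A) = (fun c => g * c * g⁻¹) '' (C : Set A)) ↔
    (∃ φ : Subring.centralizer (lmul A '' (C : Set A)) ≃+*
        Subring.centralizer (lmul A '' (C' : Set A)),
      ∀ (a : A) (u : Subring.centralizer (lmul A '' (C : Set A))),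
        (u : AddMonoid.End A) = rmul A a → (φ u : AddMonoid.End A) = rmul A a) :=
  stmt_4_general C C'
end

section
/- For every natural number n, any two unital ℝ-algebra homomorphisms f, g : ℍ → M_n(ℂ) are conjugate: there exists an invertible matrix u ∈ M_n(ℂ) such that g(q) = u · f(q) · u⁻¹ for all q ∈ ℍ. -/
/-!
Let `I, J` be the images of the quaternion units `i, j`: anticommuting square roots of `-1`
acting `ℂ`-linearly. Since `J` exchanges the `±i`-eigenspaces of `I`, the map `(x, y) ↦ x + J y`
identifies `V × V` with the whole space, `V` being the `i`-eigenspace of `I`; in these coordinates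
`I (x, y) = (i x, -i y)` and `J (x, y) = (-y, x)`. Hence the representation is determined up to
isomorphism by `dim V`, which is half the dimension of the space.
-/

open Module Module.End

theorem LinearEquiv.conj_eq_iff_apply_eq {R M M' : Type*} [CommSemiring R] [AddCommMonoid M]
    [Module R M] [AddCommMonoid M'] [Module R M'] {e : M ≃ₗ[R] M'} {A : Module.End R M}
    {A' : Module.End R M'} : e.conj A = A' ↔ ∀ m, e (A m) = A' (e m) := by
  refine ⟨fun h m ↦ by simp [← h], fun h ↦ LinearMap.ext fun m' ↦ ?_⟩
  simpa using h (e.symm m')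

namespace Module.End

variable {M : Type*} [AddCommGroup M] [Module ℂ M] {I J : Module.End ℂ M}

lemma sub_smul_apply_mem_eigenspace (hI : I * I = -1) {μ : ℂ} (hμ : μ * μ = -1) (m : M) :
    m - μ • I m ∈ eigenspace I μ := by
  have hIm : I (I m) = -m := by simpa using LinearMap.congr_fun hI m
  rw [mem_eigenspace_iff, map_sub, map_smul, hIm, smul_sub, smul_smul, hμ]
  module

lemma apply_mem_eigenspace_neg (hIJ : I * J = -(J * I)) {μ : ℂ} {x : M}
    (hx : x ∈ eigenspace I μ) : J x ∈ eigenspace I (-μ) := by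
  rw [mem_eigenspace_iff] at hx ⊢
  have := LinearMap.congr_fun hIJ x
  simp only [Module.End.mul_apply, LinearMap.neg_apply] at this
  rw [this, hx, map_smul, neg_smul]

variable (I J) in
def eigenspaceCoprod : (eigenspace I Complex.I × eigenspace I Complex.I) →ₗ[ℂ] M :=
  (eigenspace I Complex.I).subtype.coprod (J ∘ₗ (eigenspace I Complex.I).subtype)

@[simp]
lemma eigenspaceCoprod_apply (x y : eigenspace I Complex.I) :
    eigenspaceCoprod I J (x, y) = x + J y :=
  rfl

lemma eigenspaceCoprod_injective (hJ : J * J = -1) (hIJ : I * J = -(J * I)) :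
    Function.Injective (eigenspaceCoprod I J) := by
  rw [← LinearMap.ker_eq_bot, LinearMap.ker_eq_bot']
  rintro ⟨x, y⟩ hxy
  rw [eigenspaceCoprod_apply, add_eq_zero_iff_eq_neg] at hxy
  have hJy : J y ∈ eigenspace I (-Complex.I) := apply_mem_eigenspace_neg hIJ y.2
  have hx : (x : M) = 0 := by
    have hdisj : Disjoint (eigenspace I Complex.I) (eigenspace I (-Complex.I)) :=
      I.disjoint_genEigenspace (by norm_num [Complex.ext_iff]) 1 1
    refine Submodule.disjoint_def.mp hdisj x x.2 ?_
    rw [hxy]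
    exact Submodule.neg_mem _ hJy
  have hy : (y : M) = 0 := by
    have hJy0 : J y = 0 := neg_eq_zero.mp (hxy ▸ hx)
    simpa [hJy0] using (LinearMap.congr_fun hJ y).symm
  simp [Prod.ext_iff, Subtype.ext_iff, hx, hy]

lemma eigenspaceCoprod_surjective (hI : I * I = -1) (hJ : J * J = -1) (hIJ : I * J = -(J * I)) :
    Function.Surjective (eigenspaceCoprod I J) := by
  intro m
  have hx : (2⁻¹ : ℂ) • (m - Complex.I • I m) ∈ eigenspace I Complex.I :=
    Submodule.smul_mem _ _ (sub_smul_apply_mem_eigenspace hI Complex.I_mul_I m)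
  set z := (2⁻¹ : ℂ) • (m - (-Complex.I) • I m)
  have hz : z ∈ eigenspace I (-Complex.I) :=
    Submodule.smul_mem _ _ (sub_smul_apply_mem_eigenspace hI (by simp) m)
  have hy : -J z ∈ eigenspace I Complex.I := by
    simpa using Submodule.neg_mem _ (apply_mem_eigenspace_neg hIJ hz)
  refine ⟨(⟨_, hx⟩, ⟨_, hy⟩), ?_⟩
  have hJJz : J (J z) = -z := by simpa using LinearMap.congr_fun hJ z
  simp only [eigenspaceCoprod_apply, map_neg, hJJz, neg_neg, z]
  module

noncomputable def eigenspaceProdEquiv (hI : I * I = -1) (hJ : J * J = -1)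
    (hIJ : I * J = -(J * I)) : (eigenspace I Complex.I × eigenspace I Complex.I) ≃ₗ[ℂ] M :=
  .ofBijective (eigenspaceCoprod I J)
    ⟨eigenspaceCoprod_injective hJ hIJ, eigenspaceCoprod_surjective hI hJ hIJ⟩

@[simp]
lemma eigenspaceProdEquiv_apply (hI : I * I = -1) (hJ : J * J = -1) (hIJ : I * J = -(J * I))
    (x y : eigenspace I Complex.I) : eigenspaceProdEquiv hI hJ hIJ (x, y) = x + J y :=
  rfl

lemma I_apply_eigenspaceProdEquiv (hI : I * I = -1) (hJ : J * J = -1) (hIJ : I * J = -(J * I))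
    (x y : eigenspace I Complex.I) :
    I (eigenspaceProdEquiv hI hJ hIJ (x, y)) =
      eigenspaceProdEquiv hI hJ hIJ (Complex.I • x, -Complex.I • y) := by
  have hIJy : I (J y) = -J (I y) := by simpa using LinearMap.congr_fun hIJ y
  rw [eigenspaceProdEquiv_apply, eigenspaceProdEquiv_apply, map_add, hIJy,
    mem_eigenspace_iff.mp x.2, mem_eigenspace_iff.mp y.2]
  simp

lemma J_apply_eigenspaceProdEquiv (hI : I * I = -1) (hJ : J * J = -1) (hIJ : I * J = -(J * I))
    (x y : eigenspace I Complex.I) :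
    J (eigenspaceProdEquiv hI hJ hIJ (x, y)) = eigenspaceProdEquiv hI hJ hIJ (-y, x) := by
  have hJJy : J (J y) = -y := by simpa using LinearMap.congr_fun hJ y
  rw [eigenspaceProdEquiv_apply, eigenspaceProdEquiv_apply, map_add, hJJy]
  simp [add_comm]

lemma two_mul_finrank_eigenspace [FiniteDimensional ℂ M] (hI : I * I = -1) (hJ : J * J = -1)
    (hIJ : I * J = -(J * I)) : 2 * finrank ℂ (eigenspace I Complex.I) = finrank ℂ M := by
  rw [← (eigenspaceProdEquiv hI hJ hIJ).finrank_eq, finrank_prod, two_mul]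

theorem exists_linearEquiv_intertwining {M' : Type*} [AddCommGroup M'] [Module ℂ M']
    [FiniteDimensional ℂ M] [FiniteDimensional ℂ M'] {I' J' : Module.End ℂ M'}
    (hrank : finrank ℂ M = finrank ℂ M')
    (hI : I * I = -1) (hJ : J * J = -1) (hIJ : I * J = -(J * I))
    (hI' : I' * I' = -1) (hJ' : J' * J' = -1) (hIJ' : I' * J' = -(J' * I')) :
    ∃ E : M ≃ₗ[ℂ] M', E.conj I = I' ∧ E.conj J = J' := by
  let e := eigenspaceProdEquiv hI hJ hIJ
  let e' := eigenspaceProdEquiv hI' hJ' hIJ'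
  have hV : finrank ℂ (eigenspace I Complex.I) = finrank ℂ (eigenspace I' Complex.I) := by
    have := two_mul_finrank_eigenspace hI hJ hIJ
    have := two_mul_finrank_eigenspace hI' hJ' hIJ'
    omega
  let φ := LinearEquiv.ofFinrankEq _ _ hV
  refine ⟨e.symm ≪≫ₗ φ.prodCongr φ ≪≫ₗ e', ?_, ?_⟩ <;> rw [LinearEquiv.conj_eq_iff_apply_eq] <;>
    intro m <;> obtain ⟨⟨x, y⟩, rfl⟩ := e.surjective m
  · simp only [LinearEquiv.trans_apply, e, e', I_apply_eigenspaceProdEquiv,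
      LinearEquiv.symm_apply_apply, LinearEquiv.prodCongr_apply, map_smul]
  · simp only [LinearEquiv.trans_apply, e, e', J_apply_eigenspaceProdEquiv,
      LinearEquiv.symm_apply_apply, LinearEquiv.prodCongr_apply, map_neg]

end Module.End

open Quaternion QuaternionAlgebra in
theorem Quaternion.exists_linearEquiv_conjAlgEquiv_comp_eq {M M' : Type*} [AddCommGroup M]
    [Module ℂ M] [AddCommGroup M'] [Module ℂ M'] [FiniteDimensional ℂ M] [FiniteDimensional ℂ M']
    (hrank : finrank ℂ M = finrank ℂ M') (f : ℍ[ℝ] →ₐ[ℝ] Module.End ℂ M)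
    (g : ℍ[ℝ] →ₐ[ℝ] Module.End ℂ M') :
    ∃ E : M ≃ₗ[ℂ] M', (E.conjAlgEquiv ℝ).toAlgHom.comp f = g := by
  set p := lift.symm f
  set p' := lift.symm g
  have hI : p.i * p.i = -1 := p.i_mul_i.trans (by simp)
  have hJ : p.j * p.j = -1 := p.j_mul_j.trans (by simp)
  have hIJ : p.i * p.j = -(p.j * p.i) := by rw [p.i_mul_j, p.j_mul_i]; simp
  have hI' : p'.i * p'.i = -1 := p'.i_mul_i.trans (by simp)
  have hJ' : p'.j * p'.j = -1 := p'.j_mul_j.trans (by simp)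
  have hIJ' : p'.i * p'.j = -(p'.j * p'.i) := by rw [p'.i_mul_j, p'.j_mul_i]; simp
  obtain ⟨E, hEI, hEJ⟩ := exists_linearEquiv_intertwining hrank hI hJ hIJ hI' hJ' hIJ'
  exact ⟨E, Quaternion.hom_ext hEI hEJ⟩

/-- For every natural number `n`, any two unital `ℝ`-algebra homomorphisms
`f, g : ℍ → Mₙ(ℂ)` are conjugate by an invertible matrix. -/
theorem stmt_7 (n : ℕ) (f g : Quaternion ℝ →ₐ[ℝ] Matrix (Fin n) (Fin n) ℂ) :
    ∃ u : (Matrix (Fin n) (Fin n) ℂ)ˣ, ∀ q : Quaternion ℝ,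
      g q = (u : Matrix (Fin n) (Fin n) ℂ) * f q * ((u⁻¹ : (Matrix (Fin n) (Fin n) ℂ)ˣ) : Matrix (Fin n) (Fin n) ℂ) := by
  let ψ : Matrix (Fin n) (Fin n) ℂ ≃ₐ[ℝ] Module.End ℂ (Fin n → ℂ) :=
    Matrix.toLinAlgEquiv'.restrictScalars ℝ
  obtain ⟨E, hE⟩ := Quaternion.exists_linearEquiv_conjAlgEquiv_comp_eq rfl
    (ψ.toAlgHom.comp f) (ψ.toAlgHom.comp g)
  refine ⟨Units.map (ψ.symm : Module.End ℂ (Fin n → ℂ) →* Matrix (Fin n) (Fin n) ℂ)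
    (LinearMap.GeneralLinearGroup.ofLinearEquiv E), fun q ↦ ?_⟩
  have hq := congrArg (fun φ ↦ ψ.symm (φ q)) hE
  simp only [AlgHom.comp_apply, AlgEquiv.coe_toAlgHom, AlgEquiv.symm_apply_apply,
    LinearEquiv.conjAlgEquiv_apply] at hq
  rw [← hq, ← Module.End.mul_eq_comp, ← Module.End.mul_eq_comp, map_mul, map_mul,
    ψ.symm_apply_apply, ← mul_assoc]
  rfl
end

section
/- For every natural number n ≥ 1, there exists an injective unital ℝ-algebra homomorphism ℍ → M_n(ℂ) if and only if n is even. -/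
/-!
`ℍ` is a division algebra, so every unital algebra map from it to a nonzero matrix ring is
injective, and the question is only for which `n` such a map exists. The images `A`, `B` of `i`
and `j` are invertible and anticommute, so `det (A * B) = det (B * A) = (-1) ^ n * det (A * B)`
forces `n` to be even. Conversely, `ℍ` acts on `ℂ²` through Pauli-type matrices, hence on
`ℂ² ⊗ ℂᵐ = ℂ^(2m)`.
-/

open Quaternion

theorem Matrix.even_card_of_anticommute {ι R : Type*} [Fintype ι] [DecidableEq ι] [CommRing R]
    (hR : (-1 : R) ≠ 1) {A B : Matrix ι ι R} (hAB : IsUnit (A * B)) (hBA : B * A = -(A * B)) :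
    Even (Fintype.card ι) := by
  have hdet : (A * B).det = (-1) ^ Fintype.card ι * (A * B).det := by
    rw [← det_neg, ← hBA, det_mul_comm]
  have hunit : IsUnit (A * B).det := (isUnit_iff_isUnit_det _).mp hAB
  rw [← neg_one_pow_eq_one_iff_even hR]
  exact hunit.mul_eq_right.mp hdet.symm

theorem QuaternionAlgebra.Basis.j_mul_i_eq_neg_i_mul_j {R A : Type*} [CommRing R] [Ring A]
    [Algebra R A] {c₁ c₃ : R} (q : QuaternionAlgebra.Basis A c₁ 0 c₃) :
    q.j * q.i = -(q.i * q.j) := by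
  rw [q.j_mul_i, q.i_mul_j, zero_smul, zero_sub]

theorem Matrix.even_card_of_algHom_quaternionAlgebra {ι R S : Type*} [Fintype ι] [DecidableEq ι]
    [CommRing R] [CommRing S] [Algebra R S] (hS : (-1 : S) ≠ 1) {c₁ c₃ : R}
    (hc₁ : IsUnit c₁) (hc₃ : IsUnit c₃) (f : ℍ[R,c₁,0,c₃] →ₐ[R] Matrix ι ι S) :
    Even (Fintype.card ι) := by
  let q := (QuaternionAlgebra.Basis.self R).compHom f
  have hi : IsUnit q.i := isUnit_of_mul_isUnit_left <| by
    rw [q.i_mul_i, zero_smul, add_zero, ← Algebra.algebraMap_eq_smul_one]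
    exact hc₁.map _
  have hj : IsUnit q.j := isUnit_of_mul_isUnit_left <| by
    rw [q.j_mul_j, ← Algebra.algebraMap_eq_smul_one]
    exact hc₃.map _
  exact even_card_of_anticommute hS (hi.mul hj) q.j_mul_i_eq_neg_i_mul_j

noncomputable def Matrix.kroneckerOneAlgHom (m n R : Type*) [CommSemiring R] [Fintype m]
    [DecidableEq m] [Fintype n] [DecidableEq n] :
    Matrix m m R →ₐ[R] Matrix (m × n) (m × n) R :=
  (kroneckerAlgEquiv m n R).toAlgHom.comp Algebra.TensorProduct.includeLeft

namespace Quaternion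

def finTwoMatrixBasis :
    QuaternionAlgebra.Basis (Matrix (Fin 2) (Fin 2) ℂ) (-1 : ℝ) 0 (-1) where
  i := !![Complex.I, 0; 0, -Complex.I]
  j := !![0, 1; -1, 0]
  k := !![0, Complex.I; Complex.I, 0]
  i_mul_i := by ext i j; fin_cases i <;> fin_cases j <;> simp
  j_mul_j := by ext i j; fin_cases i <;> fin_cases j <;> simp
  i_mul_j := by ext i j; fin_cases i <;> fin_cases j <;> simp
  j_mul_i := by ext i j; fin_cases i <;> fin_cases j <;> simp

theorem nonempty_algHom_matrix_two_mul (m : ℕ) :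
    Nonempty (ℍ[ℝ] →ₐ[ℝ] Matrix (Fin (2 * m)) (Fin (2 * m)) ℂ) :=
  ⟨((Matrix.reindexAlgEquiv ℝ ℂ finProdFinEquiv).toAlgHom.comp
    ((Matrix.kroneckerOneAlgHom (Fin 2) (Fin m) ℂ).restrictScalars ℝ)).comp
      finTwoMatrixBasis.liftHom⟩

end Quaternion

/-- For every natural number `n ≥ 1`, there exists an injective unital `ℝ`-algebra
homomorphism `ℍ → Mₙ(ℂ)` if and only if `n` is even. -/
theorem stmt_8 (n : ℕ) (hn : 1 ≤ n) :
    (∃ f : Quaternion ℝ →ₐ[ℝ] Matrix (Fin n) (Fin n) ℂ, Function.Injective f) ↔ Even n := by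
  constructor
  · rintro ⟨f, -⟩
    simpa using
      Matrix.even_card_of_algHom_quaternionAlgebra (by norm_num) isUnit_one.neg isUnit_one.neg f
  · rintro ⟨m, rfl⟩
    rw [← two_mul] at hn ⊢
    have : Nonempty (Fin (2 * m)) := ⟨⟨0, hn⟩⟩
    obtain ⟨f⟩ := Quaternion.nonempty_algHom_matrix_two_mul m
    exact ⟨f, f.toRingHom.injective⟩
end
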